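/- arXiv:1309.2567 — 3 statements merged into one kernel-verified Lean document; each statement's English description precedes it below -/
import Mathlib

section
/- For each k ∈ ℤ, the family of standard monomials {z_k[a1,a2] : (a1,a2) ∈ ℤ²} is a basis of A(P1,P2) as an underline-K-module: it is underline-K-linearly independent and spans A(P1,P2). -/
open Polynomial
noncomputable section

namespace GCA

/-- The ambient field of rational functions in two variables over `K`. -/
abbrev F (K : Type*) [Field K] := FractionRing (MvPolynomial (Fin 2) K)

/-- The canonical embedding of `K` into `F K`. -/
def φ (K : Type*) [Field K] : K →+* F K :=
  (algebraMap (MvPolynomial (Fin 2) K) (F K)).comp (MvPolynomial.C)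

/-- The two variables `x1, x2` in `F K`. -/
def Xv (K : Type*) [Field K] (i : Fin 2) : F K :=
  algebraMap (MvPolynomial (Fin 2) K) (F K) (MvPolynomial.X i)

/-- A polynomial of degree `d` is palindromic if `P(z) = z^d P(1/z)`. -/
def Palindromic {K : Type*} [Field K] (P : K[X]) : Prop :=
  ∀ t ≤ P.natDegree, P.coeff t = P.coeff (P.natDegree - t)

/-- `x : ℤ → F K` is the sequence of cluster variables for the exchange
polynomials `P1, P2`. -/
def ClusterSeq {K : Type*} [Field K] (P1 P2 : K[X]) (x : ℤ → F K) : Prop :=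
  x 1 = Xv K 0 ∧ x 2 = Xv K 1 ∧ (∀ k, x k ≠ 0) ∧
    ∀ k : ℤ, x (k + 1) * x (k - 1) =
      if Even k then Polynomial.eval₂ (φ K) (x k) P1 else Polynomial.eval₂ (φ K) (x k) P2

/-- `underline-K`: the ℤ-subalgebra (subring) of `K` generated by the coefficients
of `P1` and `P2`. -/
def uK {K : Type*} [Field K] (P1 P2 : K[X]) : Subring K :=
  Subring.closure (Set.range P1.coeff ∪ Set.range P2.coeff)

/-- The generalized cluster algebra `A(P1,P2)`: the `uK`-subalgebra of `F K`
generated by the cluster variables, as a subring of `F K`. -/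
def clA {K : Type*} [Field K] (P1 P2 : K[X]) (x : ℤ → F K) : Subring (F K) :=
  Subring.closure (φ K '' (uK P1 P2 : Set K) ∪ Set.range x)

/-- The Laurent polynomial ring `T k` in the cluster `{x k, x (k+1)}`. -/
def clT {K : Type*} [Field K] (P1 P2 : K[X]) (x : ℤ → F K) (k : ℤ) : Subring (F K) :=
  Subring.closure (φ K '' (uK P1 P2 : Set K) ∪ {x k, (x k)⁻¹, x (k + 1), (x (k + 1))⁻¹})

/-- The standard monomial `z_k[a1,a2]`. -/
def zmon {K : Type*} [Field K] (x : ℤ → F K) (k a1 a2 : ℤ) : F K :=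
  x (k - 1) ^ (max a2 0).toNat * x k ^ (max (-a1) 0).toNat *
    x (k + 1) ^ (max (-a2) 0).toNat * x (k + 2) ^ (max a1 0).toNat

/-- `y` is pointed at `(a1, a2)` with coefficient function `c`. -/
def PointedAt {K : Type*} [Field K] (P1 P2 : K[X]) (x : ℤ → F K) (a1 a2 : ℤ)
    (c : ℕ × ℕ →₀ K) (y : F K) : Prop :=
  (∀ m, c m ∈ uK P1 P2) ∧ c (0, 0) = 1 ∧
    y = x 1 ^ (-a1) * x 2 ^ (-a2) *
      ∑ m ∈ c.support, φ K (c m) * x 1 ^ m.1 * x 2 ^ m.2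
/-!
Write `P` and `P'` for the exchange polynomials at `k` and `k + 1`.

Spanning: the exchange relations `x (k-1) * x (k+1) = P (x k)` and
`x k * x (k+2) = P' (x (k+1))` rewrite every monomial in `x (k-1), …, x (k+2)` as a
combination of standard monomials, so their `uK`-span is a subalgebra. Since the exchange
polynomials are palindromic with constant term `1`, the identity `P(u) = u^d P(1/u)` gives
polynomial expressions of `x (k+3)` and `x (k-2)` in that subalgebra. Hence the subalgebra
does not depend on `k`, and it contains every cluster variable.

Independence: `x k` and `x (k+1)` are algebraically independent, as `x 1, x 2` are and each
exchange relation passes this on to the next cluster. In these variables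
`z_k[a] = (x k)^(-a₁) (x (k+1))^(-a₂) P(x k)^[a₂]₊ P'(x (k+1))^[a₁]₊`, whose lowest term is
`(x k)^(-a₁) (x (k+1))^(-a₂)` because `P(0) = P'(0) = 1`; the lexicographically largest `a`
in a vanishing combination would therefore have coefficient `0`.
-/

open Polynomial.Bivariate Finset Function

section Palindromic

variable {K : Type*} [Field K]

lemma Palindromic.coeff_zero_eq_one {P : K[X]} (hp : Palindromic P) (hm : P.Monic) :
    P.coeff 0 = 1 := by
  rw [hp 0 (Nat.zero_le _), Nat.sub_zero, hm.coeff_natDegree]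

variable {A : Type*} [CommRing A] [Algebra K A]

lemma Palindromic.aeval_eq_sum {Q : K[X]} (hQ : Palindromic Q) (u : A) :
    aeval u Q = ∑ t ∈ range (Q.natDegree + 1), Q.coeff t • u ^ (Q.natDegree - t) := by
  rw [aeval_eq_sum_range, ← sum_range_reflect]
  refine sum_congr rfl fun t ht => ?_
  have ht : t ≤ Q.natDegree := Nat.lt_succ_iff.mp (mem_range.mp ht)
  rw [Nat.add_sub_cancel, hQ _ (Nat.sub_le _ _), Nat.sub_sub_self ht]

/-- After multiplication by `u ^ d * v`, both sides become `∑ q_t ρ^t u^(d-t)` with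
`ρ = R(v) = u * w`; on the right this uses `Q(u) = ∑ q_t u^(d-t)` (palindromicity) and
`v * R.divX(v) = ρ - 1`. -/
theorem eq_of_palindromic_exchange [IsDomain A] {Q R : K[X]} (hQ : Palindromic Q)
    (hR : R.coeff 0 = 1) {u v w y z : A} (hu : u ≠ 0) (hv : v ≠ 0)
    (hz : v * z = aeval u Q) (hw : u * w = aeval v R) (hy : v * y = aeval w Q) :
    y = z * w ^ Q.natDegree - ∑ t ∈ range (Q.natDegree + 1),
      Q.coeff t • (w ^ t * aeval v R.divX * ∑ i ∈ range (Q.natDegree - t), aeval v R ^ i) := by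
  set d := Q.natDegree
  set ρ := aeval v R
  have hdivX : v * aeval v R.divX = ρ - 1 := by
    have h := congrArg (aeval v) R.X_mul_divX_add
    rw [map_add, map_mul, aeval_X, aeval_C, hR, map_one] at h
    exact eq_sub_of_add_eq h
  have hpow : ∀ t ≤ d, u ^ d * w ^ t = ρ ^ t * u ^ (d - t) := by
    intro t ht
    rw [← hw, mul_pow, ← pow_sub_mul_pow u ht]
    ring
  have hzw :
      u ^ d * v * (z * w ^ d) = ∑ t ∈ range (d + 1), Q.coeff t • (ρ ^ d * u ^ (d - t)) := by
    rw [show u ^ d * v * (z * w ^ d) = v * z * (u * w) ^ d by ring, hz, hw, hQ.aeval_eq_sum,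
      sum_mul]
    exact sum_congr rfl fun t _ => by rw [smul_mul_assoc, mul_comm]
  have hterm : ∀ t ≤ d, u ^ d * v * (w ^ t * aeval v R.divX * ∑ i ∈ range (d - t), ρ ^ i) =
      (ρ ^ d - ρ ^ t) * u ^ (d - t) := by
    intro t ht
    calc _ = (∑ i ∈ range (d - t), ρ ^ i) * (v * aeval v R.divX) * (u ^ d * w ^ t) := by ring
      _ = _ := by
        rw [hdivX, geom_sum_mul, hpow t ht, ← pow_sub_mul_pow ρ ht]
        ring
  apply mul_left_cancel₀ (mul_ne_zero (pow_ne_zero d hu) hv)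
  rw [mul_assoc, hy, aeval_eq_sum_range, mul_sub, hzw, mul_sum, mul_sum, ← sum_sub_distrib]
  refine sum_congr rfl fun t ht => ?_
  have ht : t ≤ d := Nat.lt_succ_iff.mp (mem_range.mp ht)
  rw [mul_smul_comm, mul_smul_comm, hterm t ht, hpow t ht, ← smul_sub]
  ring_nf

end Palindromic

section Bivariate

variable {R A : Type*} [CommRing R] [CommRing A] [Algebra R A]

lemma aevalAeval_map_C (a b : A) (q : R[X]) : aevalAeval a b (q.map C) = aeval b q := by
  rw [← Bivariate.swap_C, Bivariate.aevalAeval_swap, aevalAeval_C]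

lemma injective_aevalAeval_swap {a b : A} (h : Injective (aevalAeval (R := R) a b)) :
    Injective (aevalAeval (R := R) b a) := by
  have : ⇑(aevalAeval (R := R) b a) = aevalAeval a b ∘ Bivariate.swap :=
    funext fun p => (Bivariate.aevalAeval_swap a b p).symm
  rw [this]
  exact h.comp Bivariate.swap.injective

/-- Clearing the denominator `a ^ N` of `f(b, c) = f(b, P(b) / a)` gives a polynomial
relation between `b` and `a`. -/
lemma injective_aevalAeval_of_mul_eq [IsDomain R] {a b c : A}
    (h : Injective (aevalAeval (R := R) b a)) {P : R[X]} (hP : P ≠ 0) (hc : a * c = aeval b P) :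
    Injective (aevalAeval (R := R) b c) := by
  rw [injective_iff_map_eq_zero] at h ⊢
  intro f hf
  set N := f.natDegree
  set g : R[X][Y] := ∑ j ∈ range (N + 1), C (f.coeff j * P ^ j) * Y ^ (N - j)
  have hg : aevalAeval b a g = a ^ N * aevalAeval b c f := by
    conv_rhs => rw [f.as_sum_range_C_mul_X_pow]
    simp only [g, map_sum, mul_sum, map_mul, map_pow, aevalAeval_C, aevalAeval_Y]
    refine sum_congr rfl fun j hj => ?_
    rw [← hc, ← pow_mul_pow_sub a (Nat.lt_succ_iff.mp (mem_range.mp hj))]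
    ring
  have hg0 : g = 0 := h g (by rw [hg, hf, mul_zero])
  ext j : 1
  rw [coeff_zero]
  by_cases hj : j ≤ N
  · have hcoeff := congrArg (coeff · (N - j)) hg0
    simp only [g, finsetSum_coeff, coeff_C_mul_X_pow, coeff_zero] at hcoeff
    rw [sum_eq_single j (fun i hi hij => if_neg (by have := mem_range.mp hi; omega))
      (fun hj' => absurd (mem_range.mpr (Nat.lt_succ_of_le hj)) hj'), if_pos rfl] at hcoeff
    exact (mul_eq_zero.mp hcoeff).resolve_right (pow_ne_zero j hP)
  · exact coeff_eq_zero_of_natDegree_lt (not_le.mp hj)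

lemma coeff_coeff_C_mul_map_C_mul_Y_pow (p q : R[X]) (n m i j : ℕ) :
    ((C (X ^ n * p) * q.map C * Y ^ m).coeff j).coeff i =
      if n ≤ i ∧ m ≤ j then p.coeff (i - n) * q.coeff (j - m) else 0 := by
  rw [coeff_mul_X_pow']
  by_cases hj : m ≤ j
  · rw [if_pos hj, coeff_C_mul, coeff_map, coeff_mul_C, coeff_X_pow_mul']
    by_cases hi : n ≤ i <;> simp [hi, hj]
  · simp [hj]

end Bivariate

section SubringScalars

variable {K : Type*} [Field K] {S : Subring K}

lemma subring_smul_eq_coe_smul (s : S) (y : F K) : s • y = (s : K) • y :=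
  (algebraMap_smul K s y).symm

lemma smul_mem_of_mem_subring (M : Submodule S (F K)) {r : K} (hr : r ∈ S) {y : F K}
    (hy : y ∈ M) : r • y ∈ M :=
  subring_smul_eq_coe_smul ⟨r, hr⟩ y ▸ M.smul_mem ⟨r, hr⟩ hy

lemma aeval_mem_of_coeff_mem (B : Subalgebra S (F K)) {p : K[X]}
    (hp : ∀ n, p.coeff n ∈ S) {a : F K} (ha : a ∈ B) : aeval a p ∈ B := by
  rw [aeval_eq_sum_range]
  exact sum_mem fun n _ => smul_mem_of_mem_subring B.toSubmodule (hp n) (pow_mem ha n)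

lemma exists_finsupp_of_mem_span_subring {ι : Type*} {v : ι → F K} {y : F K}
    (hy : y ∈ Submodule.span S (Set.range v)) :
    ∃ c : ι →₀ K, (∀ i, c i ∈ S) ∧ y = ∑ i ∈ c.support, φ K (c i) * v i := by
  obtain ⟨c, rfl⟩ := Finsupp.mem_span_range_iff_exists_finsupp.mp hy
  refine ⟨c.mapRange Subtype.val rfl, fun i => (c i).2, ?_⟩
  rw [Finsupp.support_mapRange_of_injective rfl _ Subtype.val_injective, Finsupp.sum]
  refine sum_congr rfl fun i _ => ?_
  rw [Finsupp.mapRange_apply, subring_smul_eq_coe_smul, Algebra.smul_def]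
  rfl

end SubringScalars

section ClusterSeq

variable {K : Type*} [Field K]

def exchangePoly (P1 P2 : K[X]) (j : ℤ) : K[X] := if Even j then P1 else P2

variable {P1 P2 : K[X]}

lemma exchangePoly_add_two (j : ℤ) : exchangePoly P1 P2 (j + 2) = exchangePoly P1 P2 j := by
  simp only [exchangePoly, even_add_two]

lemma exchangePoly_monic (hm1 : P1.Monic) (hm2 : P2.Monic) (j : ℤ) :
    (exchangePoly P1 P2 j).Monic := by
  unfold exchangePoly; split_ifs <;> assumption

lemma exchangePoly_palindromic (hp1 : Palindromic P1) (hp2 : Palindromic P2) (j : ℤ) :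
    Palindromic (exchangePoly P1 P2 j) := by
  unfold exchangePoly; split_ifs <;> assumption

lemma exchangePoly_coeff_mem (j : ℤ) (n : ℕ) : (exchangePoly P1 P2 j).coeff n ∈ uK P1 P2 := by
  refine Subring.subset_closure ?_
  unfold exchangePoly; split_ifs
  exacts [Or.inl ⟨n, rfl⟩, Or.inr ⟨n, rfl⟩]

lemma exchangePoly_coeff_zero (hm1 : P1.Monic) (hm2 : P2.Monic) (hp1 : Palindromic P1)
    (hp2 : Palindromic P2) (j : ℤ) : (exchangePoly P1 P2 j).coeff 0 = 1 :=
  (exchangePoly_palindromic hp1 hp2 j).coeff_zero_eq_one (exchangePoly_monic hm1 hm2 j)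

lemma exchangePoly_pow_coeff_zero (hm1 : P1.Monic) (hm2 : P2.Monic) (hp1 : Palindromic P1)
    (hp2 : Palindromic P2) (j : ℤ) (n : ℕ) : (exchangePoly P1 P2 j ^ n).coeff 0 = 1 := by
  rw [← constantCoeff_apply, map_pow, constantCoeff_apply,
    exchangePoly_coeff_zero hm1 hm2 hp1 hp2, one_pow]

lemma ClusterSeq.ne_zero {x : ℤ → F K} (hx : ClusterSeq P1 P2 x) (j : ℤ) : x j ≠ 0 :=
  hx.2.2.1 j

lemma ClusterSeq.exchange {x : ℤ → F K} (hx : ClusterSeq P1 P2 x) {i j l : ℤ}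
    (hi : i + 1 = j) (hl : j + 1 = l) :
    x i * x l = aeval (x j) (exchangePoly P1 P2 j) := by
  obtain rfl : i = j - 1 := by omega
  subst hl
  rw [mul_comm, hx.2.2.2 j, exchangePoly]
  split_ifs <;> rfl

end ClusterSeq

section StandardSpan

variable {K : Type*} [Field K] {P1 P2 : K[X]} {x : ℤ → F K} {k : ℤ}

variable (P1 P2 x k) in
def standardSpan : Submodule (uK P1 P2) (F K) :=
  Submodule.span (uK P1 P2) (Set.range fun a : ℤ × ℤ => zmon x k a.1 a.2)

lemma zmon_mem_standardSpan (a1 a2 : ℤ) : zmon x k a1 a2 ∈ standardSpan P1 P2 x k :=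
  Submodule.subset_span ⟨(a1, a2), rfl⟩

variable (x k) in
def clusterMonomial (b0 b1 b2 b3 : ℕ) : F K :=
  x (k - 1) ^ b0 * x k ^ b1 * x (k + 1) ^ b2 * x (k + 2) ^ b3

lemma clusterMonomial_eq_zmon {b0 b1 b2 b3 : ℕ} (h02 : b0 = 0 ∨ b2 = 0) (h13 : b1 = 0 ∨ b3 = 0) :
    clusterMonomial x k b0 b1 b2 b3 = zmon x k (b3 - b1 : ℤ) (b0 - b2 : ℤ) := by
  rcases h02 with rfl | rfl <;> rcases h13 with rfl | rfl <;> simp [clusterMonomial, zmon]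

lemma zmon_mul_zmon (a1 a2 b1 b2 : ℤ) :
    zmon x k a1 a2 * zmon x k b1 b2 =
      clusterMonomial x k ((max a2 0).toNat + (max b2 0).toNat)
        ((max (-a1) 0).toNat + (max (-b1) 0).toNat) ((max (-a2) 0).toNat + (max (-b2) 0).toNat)
        ((max a1 0).toNat + (max b1 0).toNat) := by
  simp only [zmon, clusterMonomial, pow_add]
  ring

lemma clusterMonomial_succ_zero_succ (hx : ClusterSeq P1 P2 x) (b0 b1 b2 b3 : ℕ) :
    clusterMonomial x k (b0 + 1) b1 (b2 + 1) b3 =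
      ∑ t ∈ range ((exchangePoly P1 P2 k).natDegree + 1),
        (exchangePoly P1 P2 k).coeff t • clusterMonomial x k b0 (b1 + t) b2 b3 := by
  have h := hx.exchange (i := k - 1) (j := k) (l := k + 1) (by ring) (by ring)
  rw [aeval_eq_sum_range] at h
  rw [show clusterMonomial x k (b0 + 1) b1 (b2 + 1) b3
      = x (k - 1) * x (k + 1) * clusterMonomial x k b0 b1 b2 b3 by
    simp only [clusterMonomial]; ring, h, sum_mul]
  refine sum_congr rfl fun t _ => ?_
  rw [smul_mul_assoc]
  congr 1
  simp only [clusterMonomial, pow_add]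
  ring

lemma clusterMonomial_zero_succ_zero_succ (hx : ClusterSeq P1 P2 x) (b0 b1 b2 b3 : ℕ) :
    clusterMonomial x k b0 (b1 + 1) b2 (b3 + 1) =
      ∑ t ∈ range ((exchangePoly P1 P2 (k + 1)).natDegree + 1),
        (exchangePoly P1 P2 (k + 1)).coeff t • clusterMonomial x k b0 b1 (b2 + t) b3 := by
  have h := hx.exchange (i := k) (j := k + 1) (l := k + 2) (by ring) (by ring)
  rw [aeval_eq_sum_range] at h
  rw [show clusterMonomial x k b0 (b1 + 1) b2 (b3 + 1)
      = x k * x (k + 2) * clusterMonomial x k b0 b1 b2 b3 by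
    simp only [clusterMonomial]; ring, h, sum_mul]
  refine sum_congr rfl fun t _ => ?_
  rw [smul_mul_assoc]
  congr 1
  simp only [clusterMonomial, pow_add]
  ring

theorem clusterMonomial_mem_standardSpan (hx : ClusterSeq P1 P2 x) (b0 b1 b2 b3 : ℕ) :
    clusterMonomial x k b0 b1 b2 b3 ∈ standardSpan P1 P2 x k := by
  by_cases h02 : b0 ≠ 0 ∧ b2 ≠ 0
  · obtain ⟨b0, rfl⟩ := Nat.exists_eq_succ_of_ne_zero h02.1
    obtain ⟨b2, rfl⟩ := Nat.exists_eq_succ_of_ne_zero h02.2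
    rw [clusterMonomial_succ_zero_succ hx]
    exact sum_mem fun t _ => smul_mem_of_mem_subring _ (exchangePoly_coeff_mem k t)
      (clusterMonomial_mem_standardSpan hx b0 (b1 + t) b2 b3)
  by_cases h13 : b1 ≠ 0 ∧ b3 ≠ 0
  · obtain ⟨b1, rfl⟩ := Nat.exists_eq_succ_of_ne_zero h13.1
    obtain ⟨b3, rfl⟩ := Nat.exists_eq_succ_of_ne_zero h13.2
    rw [clusterMonomial_zero_succ_zero_succ hx]
    exact sum_mem fun t _ => smul_mem_of_mem_subring _ (exchangePoly_coeff_mem (k + 1) t)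
      (clusterMonomial_mem_standardSpan hx b0 b1 (b2 + t) b3)
  rw [clusterMonomial_eq_zmon (by omega) (by omega)]
  exact zmon_mem_standardSpan _ _
termination_by b0 + b3

lemma mul_mem_standardSpan (hx : ClusterSeq P1 P2 x) {y y' : F K}
    (hy : y ∈ standardSpan P1 P2 x k) (hy' : y' ∈ standardSpan P1 P2 x k) :
    y * y' ∈ standardSpan P1 P2 x k := by
  have hle : standardSpan P1 P2 x k * standardSpan P1 P2 x k ≤ standardSpan P1 P2 x k := by
    rw [standardSpan, Submodule.span_mul_span, Submodule.span_le]
    rintro _ ⟨_, ⟨a, rfl⟩, _, ⟨b, rfl⟩, rfl⟩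
    dsimp only
    rw [zmon_mul_zmon]
    exact clusterMonomial_mem_standardSpan hx _ _ _ _
  exact hle (Submodule.mul_mem_mul hy hy')

def standardAlgebra (hx : ClusterSeq P1 P2 x) (k : ℤ) : Subalgebra (uK P1 P2) (F K) :=
  (standardSpan P1 P2 x k).toSubalgebra (by simpa [zmon] using zmon_mem_standardSpan 0 0)
    fun _ _ => mul_mem_standardSpan hx

end StandardSpan

section StandardAlgebra

variable {K : Type*} [Field K] {P1 P2 : K[X]} {x : ℤ → F K} {k : ℤ}

lemma mem_standardAlgebra_iff (hx : ClusterSeq P1 P2 x) {y : F K} :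
    y ∈ standardAlgebra hx k ↔ y ∈ standardSpan P1 P2 x k :=
  Iff.rfl

lemma x_mem_standardAlgebra (hx : ClusterSeq P1 P2 x) {j : ℤ} (hj1 : k - 1 ≤ j)
    (hj2 : j ≤ k + 2) :
    x j ∈ standardAlgebra hx k := by
  rw [mem_standardAlgebra_iff]
  obtain h | h | h | h : j = k - 1 ∨ j = k ∨ j = k + 1 ∨ j = k + 2 := by omega
  · convert zmon_mem_standardSpan 0 1 using 1; simp [h, zmon]
  · convert zmon_mem_standardSpan (-1) 0 using 1; simp [h, zmon]
  · convert zmon_mem_standardSpan 0 (-1) using 1; simp [h, zmon]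
  · convert zmon_mem_standardSpan 1 0 using 1; simp [h, zmon]

lemma zmon_mem {B : Type*} [SetLike B (F K)] [SubmonoidClass B (F K)] {s : B} (j a1 a2 : ℤ)
    (h : ∀ i, j - 1 ≤ i → i ≤ j + 2 → x i ∈ s) : zmon x j a1 a2 ∈ s := by
  unfold zmon
  exact mul_mem (mul_mem (mul_mem (pow_mem (h _ le_rfl (by omega)) _)
    (pow_mem (h _ (by omega) (by omega)) _)) (pow_mem (h _ (by omega) (by omega)) _))
    (pow_mem (h _ (by omega) le_rfl) _)

lemma standardAlgebra_le (hx : ClusterSeq P1 P2 x) {B : Subalgebra (uK P1 P2) (F K)}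
    (h : ∀ i, k - 1 ≤ i → i ≤ k + 2 → x i ∈ B) : standardAlgebra hx k ≤ B := by
  intro y hy
  refine (Submodule.span_le (p := Subalgebra.toSubmodule B)).mpr ?_ hy
  rintro _ ⟨a, rfl⟩
  exact (Subalgebra.mem_toSubmodule B).mpr (zmon_mem k a.1 a.2 h)

lemma mem_of_palindromic_exchange {B : Subalgebra (uK P1 P2) (F K)} {Q R : K[X]}
    (hQ : Palindromic Q) (hR : R.coeff 0 = 1) (hQS : ∀ n, Q.coeff n ∈ uK P1 P2)
    (hRS : ∀ n, R.coeff n ∈ uK P1 P2) {u v w y z : F K} (hu : u ≠ 0) (hv : v ≠ 0)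
    (hz : v * z = aeval u Q) (hw : u * w = aeval v R) (hy : v * y = aeval w Q)
    (hvB : v ∈ B) (hwB : w ∈ B) (hzB : z ∈ B) : y ∈ B := by
  rw [eq_of_palindromic_exchange hQ hR hu hv hz hw hy]
  have hρ : aeval v R ∈ B := aeval_mem_of_coeff_mem B hRS hvB
  have hdivX : aeval v R.divX ∈ B :=
    aeval_mem_of_coeff_mem B (fun n => by rw [coeff_divX]; exact hRS _) hvB
  exact sub_mem (mul_mem hzB (pow_mem hwB _)) <| sum_mem fun t _ =>
    smul_mem_of_mem_subring B.toSubmodule (hQS t) <| (Subalgebra.mem_toSubmodule B).mpr <|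
      mul_mem (mul_mem (pow_mem hwB t) hdivX) (sum_mem fun i _ => pow_mem hρ i)

variable (hm1 : P1.Monic) (hm2 : P2.Monic) (hp1 : Palindromic P1) (hp2 : Palindromic P2)

include hm1 hm2 hp1 hp2

lemma x_add_three_mem_standardAlgebra (hx : ClusterSeq P1 P2 x) :
    x (k + 3) ∈ standardAlgebra hx k :=
  mem_of_palindromic_exchange (exchangePoly_palindromic hp1 hp2 k)
    (exchangePoly_coeff_zero hm1 hm2 hp1 hp2 (k + 1)) (exchangePoly_coeff_mem k)
    (exchangePoly_coeff_mem (k + 1)) (hx.ne_zero k) (hx.ne_zero (k + 1))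
    ((mul_comm _ _).trans (hx.exchange (i := k - 1) (l := k + 1) (by ring) (by ring)))
    (hx.exchange (i := k) (l := k + 2) (by ring) (by ring))
    (by rw [hx.exchange (i := k + 1) (j := k + 2) (by ring) (by ring), exchangePoly_add_two])
    (x_mem_standardAlgebra hx (by omega) (by omega))
    (x_mem_standardAlgebra hx (by omega) (by omega))
    (x_mem_standardAlgebra hx (by omega) (by omega))

lemma x_sub_two_mem_standardAlgebra (hx : ClusterSeq P1 P2 x) :
    x (k - 2) ∈ standardAlgebra hx k :=
  mem_of_palindromic_exchange (exchangePoly_palindromic hp1 hp2 (k + 1))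
    (exchangePoly_coeff_zero hm1 hm2 hp1 hp2 k) (exchangePoly_coeff_mem (k + 1))
    (exchangePoly_coeff_mem k) (hx.ne_zero (k + 1)) (hx.ne_zero k)
    (hx.exchange (i := k) (l := k + 2) (by ring) (by ring))
    ((mul_comm _ _).trans (hx.exchange (i := k - 1) (l := k + 1) (by ring) (by ring)))
    (by rw [mul_comm, hx.exchange (j := k - 1) (by ring) (by ring), show k + 1 = k - 1 + 2 by ring,
      exchangePoly_add_two])
    (x_mem_standardAlgebra hx (by omega) (by omega))
    (x_mem_standardAlgebra hx (by omega) (by omega))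
    (x_mem_standardAlgebra hx (by omega) (by omega))

lemma standardAlgebra_succ (hx : ClusterSeq P1 P2 x) (k : ℤ) :
    standardAlgebra hx (k + 1) = standardAlgebra hx k := by
  refine le_antisymm (standardAlgebra_le hx fun i h1 h2 => ?_)
    (standardAlgebra_le hx fun i h1 h2 => ?_)
  · rcases lt_or_eq_of_le h2 with h | rfl
    · exact x_mem_standardAlgebra hx (by omega) (by omega)
    · rw [add_assoc]
      exact x_add_three_mem_standardAlgebra hm1 hm2 hp1 hp2 hx
  · rcases lt_or_eq_of_le h1 with h | rfl
    · exact x_mem_standardAlgebra hx (by omega) (by omega)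
    · rw [show k - 1 = k + 1 - 2 by ring]
      exact x_sub_two_mem_standardAlgebra hm1 hm2 hp1 hp2 hx

lemma standardAlgebra_eq (hx : ClusterSeq P1 P2 x) (k l : ℤ) :
    standardAlgebra hx k = standardAlgebra hx l := by
  induction l using Int.inductionOn' (b := k) with
  | zero => rfl
  | succ i _ ih => rw [ih, standardAlgebra_succ hm1 hm2 hp1 hp2]
  | pred i _ ih => rw [ih, ← standardAlgebra_succ hm1 hm2 hp1 hp2 hx (i - 1), sub_add_cancel]

theorem clA_le_standardAlgebra (hx : ClusterSeq P1 P2 x) (k : ℤ) :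
    clA P1 P2 x ≤ (standardAlgebra hx k).toSubring := by
  refine Subring.closure_le.mpr (Set.union_subset ?_ ?_)
  · rintro _ ⟨r, hr, rfl⟩
    exact IsScalarTower.algebraMap_apply (uK P1 P2) K (F K) ⟨r, hr⟩ ▸
      (standardAlgebra hx k).algebraMap_mem ⟨r, hr⟩
  · rintro _ ⟨m, rfl⟩
    rw [SetLike.mem_coe, Subalgebra.mem_toSubring, standardAlgebra_eq hm1 hm2 hp1 hp2 hx k m]
    exact x_mem_standardAlgebra hx (by omega) (by omega)

end StandardAlgebra

section Independence

variable {K : Type*} [Field K] {P1 P2 : K[X]} {x : ℤ → F K}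

lemma injective_aevalAeval_Xv : Injective (aevalAeval (R := K) (Xv K 0) (Xv K 1)) := by
  have : aevalAeval (R := K) (Xv K 0) (Xv K 1) =
      (IsScalarTower.toAlgHom K (MvPolynomial (Fin 2) K) (F K)).comp
        (Bivariate.equivMvPolynomial K).toAlgHom := by
    ext <;> simp [Xv, Bivariate.equivMvPolynomial]
  rw [this]
  exact (IsFractionRing.injective _ _).comp (Bivariate.equivMvPolynomial K).injective

theorem ClusterSeq.injective_aevalAeval (hm1 : P1.Monic) (hm2 : P2.Monic)
    (hx : ClusterSeq P1 P2 x) (k : ℤ) : Injective (aevalAeval (R := K) (x k) (x (k + 1))) := by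
  have hP := fun j => (exchangePoly_monic hm1 hm2 j).ne_zero
  induction k using Int.inductionOn' (b := 1) with
  | zero => rw [hx.1, show (1 : ℤ) + 1 = 2 by norm_num, hx.2.1]; exact injective_aevalAeval_Xv
  | succ i _ ih =>
    exact injective_aevalAeval_of_mul_eq (injective_aevalAeval_swap ih) (hP (i + 1))
      (hx.exchange rfl rfl)
  | pred i _ ih =>
    rw [sub_add_cancel]
    exact injective_aevalAeval_swap <| injective_aevalAeval_of_mul_eq ih (hP i)
      ((mul_comm _ _).trans (hx.exchange (i := i - 1) (l := i + 1) (by ring) rfl))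

/-- `x k ^ N * x (k + 1) ^ N * z_k[a]` as a polynomial in `x k` (inner variable) and
`x (k + 1)` (outer variable), when `Q` and `R` are the exchange polynomials at `k` and `k + 1`. -/
def standardPoly (Q R : K[X]) (N : ℕ) (a : ℤ × ℤ) : K[X][Y] :=
  C (X ^ (N - a.1).toNat * Q ^ (max a.2 0).toNat) * (R ^ (max a.1 0).toNat).map C *
    Y ^ (N - a.2).toNat

lemma aevalAeval_standardPoly {k : ℤ} (hx : ClusterSeq P1 P2 x) {N : ℕ} {a : ℤ × ℤ}
    (h1 : a.1 ≤ N) (h2 : a.2 ≤ N) :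
    aevalAeval (x k) (x (k + 1))
        (standardPoly (exchangePoly P1 P2 k) (exchangePoly P1 P2 (k + 1)) N a) =
      x k ^ N * x (k + 1) ^ N * zmon x k a.1 a.2 := by
  simp only [standardPoly, map_mul, map_pow, aevalAeval_C, aevalAeval_Y, aevalAeval_map_C,
    aeval_X, ← hx.exchange (i := k - 1) (j := k) (l := k + 1) (by ring) (by ring),
    ← hx.exchange (i := k) (j := k + 1) (l := k + 2) (by ring) (by ring), zmon]
  have e1 : (N - a.1).toNat + (max a.1 0).toNat = N + (max (-a.1) 0).toNat := by omega
  have e2 : (N - a.2).toNat + (max a.2 0).toNat = N + (max (-a.2) 0).toNat := by omega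
  trans x (k - 1) ^ (max a.2 0).toNat * x k ^ ((N - a.1).toNat + (max a.1 0).toNat) *
    x (k + 1) ^ ((N - a.2).toNat + (max a.2 0).toNat) * x (k + 2) ^ (max a.1 0).toNat
  · ring
  · rw [e1, e2]
    ring

theorem linearIndependent_zmon (hm1 : P1.Monic) (hm2 : P2.Monic) (hp1 : Palindromic P1)
    (hp2 : Palindromic P2) (hx : ClusterSeq P1 P2 x) (k : ℤ) :
    LinearIndependent K fun a : ℤ × ℤ => zmon x k a.1 a.2 := by
  classical
  rw [linearIndependent_iff]
  intro c hc
  by_contra hne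
  obtain ⟨a, ha, hmax⟩ :=
    c.support.exists_max_image toLex (Finsupp.support_nonempty_iff.mpr hne)
  set N := c.support.sup fun m => m.1.toNat ⊔ m.2.toNat
  have hN : ∀ m ∈ c.support, m.1 ≤ N ∧ m.2 ≤ N := fun m hm => by
    have := le_sup (f := fun m : ℤ × ℤ => m.1.toNat ⊔ m.2.toNat) hm
    omega
  set G := standardPoly (exchangePoly P1 P2 k) (exchangePoly P1 P2 (k + 1)) N
  have hG : ∑ m ∈ c.support, c m • G m = 0 := by
    refine hx.injective_aevalAeval hm1 hm2 k ?_
    rw [Finsupp.linearCombination_apply, Finsupp.sum] at hc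
    rw [map_sum, map_zero, ← mul_zero (x k ^ N * x (k + 1) ^ N), ← hc, mul_sum]
    refine sum_congr rfl fun m hm => ?_
    rw [map_smul, aevalAeval_standardPoly hx (hN m hm).1 (hN m hm).2, mul_smul_comm]
  have hcoeff := congrArg (fun p => (p.coeff (N - a.2).toNat).coeff (N - a.1).toNat) hG
  simp only [finsetSum_coeff, coeff_smul, smul_eq_mul, coeff_zero, G, standardPoly,
    coeff_coeff_C_mul_map_C_mul_Y_pow] at hcoeff
  rw [sum_eq_single a] at hcoeff
  · rw [if_pos ⟨le_rfl, le_rfl⟩, Nat.sub_self, Nat.sub_self,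
      exchangePoly_pow_coeff_zero hm1 hm2 hp1 hp2, exchangePoly_pow_coeff_zero hm1 hm2 hp1 hp2,
      mul_one, mul_one] at hcoeff
    exact Finsupp.mem_support_iff.mp ha hcoeff
  · intro m hm hma
    have hlt := Prod.Lex.toLex_lt_toLex.mp (lt_of_le_of_ne (hmax m hm) (toLex.injective.ne hma))
    have := hN a ha
    rw [if_neg (by omega), mul_zero]
  · exact fun h => absurd ha h

end Independence

theorem standard_monomial_basis_general {K : Type*} [Field K] (P1 P2 : K[X])
    (hm1 : P1.Monic) (hm2 : P2.Monic) (hp1 : Palindromic P1) (hp2 : Palindromic P2)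
    (x : ℤ → F K) (hx : ClusterSeq P1 P2 x) (k : ℤ) :
    (∀ c : ℤ × ℤ →₀ K, (∀ m, c m ∈ uK P1 P2) →
        ∑ m ∈ c.support, φ K (c m) * zmon x k m.1 m.2 = 0 → c = 0) ∧
    (∀ y ∈ clA P1 P2 x, ∃ c : ℤ × ℤ →₀ K, (∀ m, c m ∈ uK P1 P2) ∧
        y = ∑ m ∈ c.support, φ K (c m) * zmon x k m.1 m.2) := by
  refine ⟨fun c _ hsum => ?_, fun y hy => ?_⟩
  · refine linearIndependent_iff.mp (linearIndependent_zmon hm1 hm2 hp1 hp2 hx k) c ?_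
    rw [Finsupp.linearCombination_apply, Finsupp.sum]
    simp only [Algebra.smul_def]
    exact hsum
  · exact exists_finsupp_of_mem_span_subring (clA_le_standardAlgebra hm1 hm2 hp1 hp2 hx k hy)

/-- For each `k`, the standard monomials `z_k[a1,a2]`, `(a1,a2) ∈ ℤ²`, form an
`underline-K`-basis of `A(P1,P2)`: they are linearly independent over `underline-K`
and span `A(P1,P2)` over `underline-K`. -/
theorem standard_monomial_basis {K : Type*} [Field K] [CharZero K] (P1 P2 : K[X])
    (hm1 : P1.Monic) (hm2 : P2.Monic) (hp1 : Palindromic P1) (hp2 : Palindromic P2)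
    (x : ℤ → F K) (hx : ClusterSeq P1 P2 x) (k : ℤ) :
    (∀ c : ℤ × ℤ →₀ K, (∀ m, c m ∈ uK P1 P2) →
        ∑ m ∈ c.support, φ K (c m) * zmon x k m.1 m.2 = 0 → c = 0) ∧
    (∀ y ∈ clA P1 P2 x, ∃ c : ℤ × ℤ →₀ K, (∀ m, c m ∈ uK P1 P2) ∧
        y = ∑ m ∈ c.support, φ K (c m) * zmon x k m.1 m.2) :=
  standard_monomial_basis_general P1 P2 hm1 hm2 hp1 hp2 x hx k

end GCA
end
end

section
/- (a) If a1 > 0, the height of the horizontal edge h_j of the maximal Dyck path D_{a1,a2} is ⌊(j−1)·a2/a1⌋ for 1 ≤ j ≤ a1, and consequently for 1 ≤ i < j ≤ a1 the number of vertical edges in the subpath from h_i to h_j equals ⌊(j−1)·a2/a1⌋ − ⌊(i−1)·a2/a1⌋. (b) If a2 > 0, the depth of the vertical edge v_j is ⌈j·a1/a2⌉ for 1 ≤ j ≤ a2, and consequently for 1 ≤ i < j ≤ a2 the number of horizontal edges in the subpath from v_i to v_j equals ⌈j·a1/a2⌉ − ⌈i·a1/a2⌉. -/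
/-!
Along the path both coordinates are non-decreasing, so the number of North (East) steps between
two times is the increase of the second (first) coordinate. At an East step leaving column `x`,
the current height `y` is the top of that column: the path stays below the diagonal, so
`a * y ≤ b * x`, and by maximality the lattice point `(x, y + 1)` above the whole column lies
strictly above the diagonal, so `b * x < a * (y + 1)`; hence `y = ⌊x b / a⌋`. At a North step from
`(x, y)`, the point `(x, y + 1)` is on the path and `(x - 1, y + 1)` lies above column `x - 1`,
so `a * (y + 1) ≤ b * x < a * (y + 1) + b`, i.e. `x = ⌈(y + 1) a / b⌉`.
-/

noncomputable section

/-- `p : ℕ → ℕ × ℕ` describes the maximal Dyck path `D_{a,b}`: it starts at `(0,0)`,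
ends at `(a,b)`, takes unit East or North steps, never goes above the main diagonal
of the rectangle, and is closest to the diagonal: every lattice point strictly above
the path is strictly above the diagonal. -/
def IsMaxDyckPath (a b : ℕ) (p : ℕ → ℕ × ℕ) : Prop :=
  p 0 = (0, 0) ∧ p (a + b) = (a, b) ∧
  (∀ t < a + b, p (t + 1) = ((p t).1 + 1, (p t).2) ∨ p (t + 1) = ((p t).1, (p t).2 + 1)) ∧
  (∀ t ≤ a + b, a * (p t).2 ≤ b * (p t).1) ∧
  (∀ x y : ℕ, x ≤ a → (∀ t ≤ a + b, (p t).1 = x → (p t).2 < y) → b * x < a * y)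

open Finset

theorem card_filter_Ico_add_one_add {f : ℕ → ℕ} {s u : ℕ} (hsu : s ≤ u)
    (hf : ∀ t, s ≤ t → t < u → f (t + 1) = f t ∨ f (t + 1) = f t + 1) :
    #{t ∈ Ico s u | f (t + 1) = f t + 1} + f s = f u := by
  induction u, hsu using Nat.le_induction with
  | base => simp
  | succ n hsn ih =>
    have ih := ih fun t hst htn => hf t hst (by omega)
    rw [Nat.Ico_succ_right_eq_insert_Ico hsn, filter_insert]
    rcases hf n hsn (by omega) with h | h
    · rw [if_neg (by omega)]
      omega
    · rw [if_pos h, card_insert_of_notMem (by simp)]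
      omega

theorem add_sub_one_div_eq_of_le_of_lt {m b x : ℕ} (hb : 0 < b) (hle : m ≤ b * x)
    (hlt : b * x < m + b) : (m + b - 1) / b = x := by
  rw [Nat.div_eq_iff hb]
  constructor <;> rw [Nat.mul_comm] <;> omega

namespace IsMaxDyckPath

variable {a b : ℕ} {p : ℕ → ℕ × ℕ} (hp : IsMaxDyckPath a b p)
include hp

theorem fst_step {t : ℕ} (ht : t < a + b) :
    (p (t + 1)).1 = (p t).1 ∨ (p (t + 1)).1 = (p t).1 + 1 := by
  rcases hp.2.2.1 t ht with h | h <;> simp [h]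

theorem snd_step {t : ℕ} (ht : t < a + b) :
    (p (t + 1)).2 = (p t).2 ∨ (p (t + 1)).2 = (p t).2 + 1 := by
  rcases hp.2.2.1 t ht with h | h <;> simp [h]

theorem snd_succ_of_east {t : ℕ} (ht : t < a + b) (hE : (p (t + 1)).1 = (p t).1 + 1) :
    (p (t + 1)).2 = (p t).2 := by
  rcases hp.2.2.1 t ht with h | h <;> simp [h] at hE ⊢

theorem fst_succ_of_north {t : ℕ} (ht : t < a + b) (hN : (p (t + 1)).2 = (p t).2 + 1) :
    (p (t + 1)).1 = (p t).1 := by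
  rcases hp.2.2.1 t ht with h | h <;> simp [h] at hN ⊢

theorem card_east_add {s u : ℕ} (hsu : s ≤ u) (hu : u ≤ a + b) :
    #{t ∈ Ico s u | (p (t + 1)).1 = (p t).1 + 1} + (p s).1 = (p u).1 :=
  card_filter_Ico_add_one_add (f := fun t => (p t).1) hsu fun _ _ htu => hp.fst_step (by omega)

theorem card_north_add {s u : ℕ} (hsu : s ≤ u) (hu : u ≤ a + b) :
    #{t ∈ Ico s u | (p (t + 1)).2 = (p t).2 + 1} + (p s).2 = (p u).2 :=
  card_filter_Ico_add_one_add (f := fun t => (p t).2) hsu fun _ _ htu => hp.snd_step (by omega)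

theorem lt_of_fst_lt {s t : ℕ} (hs : s ≤ a + b) (h : (p s).1 < (p t).1) : s < t := by
  by_contra! hts
  have := hp.card_east_add hts hs
  omega

theorem lt_of_snd_lt {s t : ℕ} (hs : s ≤ a + b) (h : (p s).2 < (p t).2) : s < t := by
  by_contra! hts
  have := hp.card_north_add hts hs
  omega

theorem snd_le_of_fst_lt {s t : ℕ} (hs : s ≤ a + b) (ht : t ≤ a + b) (h : (p s).1 < (p t).1) :
    (p s).2 ≤ (p t).2 :=
  (hp.card_north_add (hp.lt_of_fst_lt hs h).le ht).symm ▸ Nat.le_add_left _ _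

theorem fst_le {t : ℕ} (ht : t ≤ a + b) : (p t).1 ≤ a := by
  have := hp.card_east_add ht le_rfl
  rw [hp.2.1] at this
  omega

theorem snd_eq_of_east {t : ℕ} (ht : t < a + b)
    (hE : (p (t + 1)).1 = (p t).1 + 1) : (p t).2 = (p t).1 * b / a := by
  have below : a * (p t).2 ≤ b * (p t).1 := hp.2.2.2.1 t ht.le
  have column_top : ∀ s ≤ a + b, (p s).1 = (p t).1 → (p s).2 < (p t).2 + 1 := fun s hs hx =>
    Nat.lt_succ_of_le <| hp.snd_succ_of_east ht hE ▸ hp.snd_le_of_fst_lt hs ht (by omega)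
  have above : b * (p t).1 < a * ((p t).2 + 1) :=
    hp.2.2.2.2 _ _ (hp.fst_le ht.le) column_top
  refine (Nat.div_eq_of_lt_le ?_ ?_).symm <;> rw [Nat.mul_comm] <;> linarith

theorem fst_eq_of_north (hb : 0 < b) {t : ℕ} (ht : t < a + b)
    (hN : (p (t + 1)).2 = (p t).2 + 1) :
    (p t).1 = (((p t).2 + 1) * a + b - 1) / b := by
  have below : a * ((p t).2 + 1) ≤ b * (p t).1 := by
    simpa [hN, hp.fst_succ_of_north ht hN] using hp.2.2.2.1 (t + 1) ht
  have above : b * (p t).1 < a * ((p t).2 + 1) + b := by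
    rcases Nat.eq_zero_or_pos (p t).1 with h0 | hpos
    · simp [h0, hb]
    have left_column : ∀ s ≤ a + b, (p s).1 = (p t).1 - 1 → (p s).2 < (p t).2 + 1 :=
      fun _ hs hx => Nat.lt_succ_of_le (hp.snd_le_of_fst_lt hs ht.le (by omega))
    have := hp.2.2.2.2 _ _ (by have := hp.fst_le ht.le; omega) left_column
    rw [Nat.mul_sub_one] at this
    have : b ≤ b * (p t).1 := Nat.le_mul_of_pos_right b hpos
    omega
  rw [Nat.mul_comm _ a]
  exact (add_sub_one_div_eq_of_le_of_lt hb below above).symm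

end IsMaxDyckPath

/-- **Heights and depths of the edges of a maximal Dyck path.**
(a) If `a1 > 0`, the height of the `j`-th horizontal edge (the East step taking the
first coordinate from `j-1` to `j`) is `⌊(j-1)·a2/a1⌋`, and for `1 ≤ i < j ≤ a1` the
number of vertical edges in the subpath from `h_i` to `h_j` is
`⌊(j-1)·a2/a1⌋ − ⌊(i-1)·a2/a1⌋`.
(b) If `a2 > 0`, the depth of the `j`-th vertical edge is `⌈j·a1/a2⌉`, and for
`1 ≤ i < j ≤ a2` the number of horizontal edges in the subpath from `v_i` to `v_j`
is `⌈j·a1/a2⌉ − ⌈i·a1/a2⌉`. -/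
theorem maxDyckPath_height_depth (a1 a2 : ℕ) (p : ℕ → ℕ × ℕ)
    (hp : IsMaxDyckPath a1 a2 p) :
    (0 < a1 → ∀ j, 1 ≤ j → j ≤ a1 → ∀ t < a1 + a2,
      (p (t + 1)).1 = (p t).1 + 1 → (p t).1 = j - 1 →
      (p t).2 = (j - 1) * a2 / a1) ∧
    (0 < a1 → ∀ i j ti tj, 1 ≤ i → i < j → j ≤ a1 → ti < a1 + a2 → tj < a1 + a2 →
      (p (ti + 1)).1 = (p ti).1 + 1 → (p ti).1 = i - 1 →
      (p (tj + 1)).1 = (p tj).1 + 1 → (p tj).1 = j - 1 →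
      ((Finset.Ico ti tj).filter fun t => (p (t + 1)).2 = (p t).2 + 1).card
        = (j - 1) * a2 / a1 - (i - 1) * a2 / a1) ∧
    (0 < a2 → ∀ j, 1 ≤ j → j ≤ a2 → ∀ t < a1 + a2,
      (p (t + 1)).2 = (p t).2 + 1 → (p t).2 = j - 1 →
      (p t).1 = (j * a1 + a2 - 1) / a2) ∧
    (0 < a2 → ∀ i j ti tj, 1 ≤ i → i < j → j ≤ a2 → ti < a1 + a2 → tj < a1 + a2 →
      (p (ti + 1)).2 = (p ti).2 + 1 → (p ti).2 = i - 1 →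
      (p (tj + 1)).2 = (p tj).2 + 1 → (p tj).2 = j - 1 →
      ((Finset.Ico ti tj).filter fun t => (p (t + 1)).1 = (p t).1 + 1).card
        = (j * a1 + a2 - 1) / a2 - (i * a1 + a2 - 1) / a2) := by
  refine ⟨?height, ?vertical_count, ?depth, ?horizontal_count⟩
  case height =>
    intro _ j _ _ t ht hE hx
    rw [hp.snd_eq_of_east ht hE, hx]
  case vertical_count =>
    intro _ i j ti tj _ hij _ hti htj hEi hxi hEj hxj
    have hle : ti ≤ tj := (hp.lt_of_fst_lt hti.le (by omega)).le
    have hcount := hp.card_north_add hle htj.le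
    rw [hp.snd_eq_of_east hti hEi, hp.snd_eq_of_east htj hEj, hxi, hxj] at hcount
    omega
  case depth =>
    intro hb j hj _ t ht hN hy
    rw [hp.fst_eq_of_north hb ht hN, hy, Nat.sub_add_cancel hj]
  case horizontal_count =>
    intro hb i j ti tj hi hij _ hti htj hNi hyi hNj hyj
    have hle : ti ≤ tj := (hp.lt_of_snd_lt hti.le (by omega)).le
    have hcount := hp.card_east_add hle htj.le
    rw [hp.fst_eq_of_north hb hti hNi, hp.fst_eq_of_north hb htj hNj, hyi, hyj,
      Nat.sub_add_cancel hi, Nat.sub_add_cancel (hi.trans hij.le)] at hcount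
    omega
end
end

section
/- Let a1, a2 > 0, let h ∈ D1 be a horizontal edge of the maximal Dyck path D_{a1,a2} and let v_j ∈ D2 be a vertical edge lying to the right of/above h (h precedes v_j along the path from (0,0) to (a1,a2)). Then a1·(|(h v_j)_2| − 1) < a2·|(h v_j)_1|, where (h v_j)_1 and (h v_j)_2 are the sets of horizontal and vertical edges of the subpath of D from h to v_j inclusive. -/
/-!
The maximal Dyck path interleaves its edges by a Galois connection: `v_{j+1}` precedes
`h_{k+1}` exactly when `⌈(j+1)·a/b⌉ ≤ k`, i.e. when `j < ⌊k·b/a⌋`. Hence the subpath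
from `h = h_{i+1}` to `v = v_{j+1}` consists of the horizontal edges `h_{i+1}, …, h_d` and
the vertical edges `v_{t+1}, …, v_{j+1}`, where `t = ⌊i·b/a⌋` and `d = ⌈(j+1)·a/b⌉`.
The bound then reads `a·(j - t) < b·(d - i)`, which is the difference of `(j+1)·a ≤ d·b`
and `i·b < (t+1)·a`.
-/

open scoped Classical
noncomputable section

namespace Dyck

/-- The edges of the maximal Dyck path `D_{a,b}`: `a` horizontal edges
`h_1, …, h_a` (0-indexed here) and `b` vertical edges `v_1, …, v_b`. -/
abbrev Edge (a b : ℕ) := Fin a ⊕ Fin b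

/-- The height of the horizontal edge `h_{j+1}` of `D_{a,b}` is `⌊j·b/a⌋`. -/
def ht (a b : ℕ) (j : Fin a) : ℕ := j.1 * b / a

/-- The depth of the vertical edge `v_{j+1}` of `D_{a,b}` is `⌈(j+1)·a/b⌉`. -/
def dep (a b : ℕ) (j : Fin b) : ℕ := ((j.1 + 1) * a + b - 1) / b

/-- The position (0-indexed) of an edge along the maximal Dyck path `D_{a,b}`:
a horizontal edge `h_{j+1}` is preceded by `j` horizontal edges and by `ht j`
vertical edges; a vertical edge `v_{j+1}` is preceded by `j` vertical edges and
by `dep j` horizontal edges. -/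
def pos (a b : ℕ) : Edge a b → ℕ
  | Sum.inl j => j.1 + ht a b j
  | Sum.inr j => j.1 + dep a b j

/-- Cyclic distance from `e` to `f` along the closed loop `D_{a,b}`
(the endpoints `(0,0)` and `(a,b)` are identified). -/
def dd (a b : ℕ) (e f : Edge a b) : ℕ := (pos a b f + (a + b) - pos a b e) % (a + b)

/-- The (cyclic) subpath of `D_{a,b}` from `e` to `f`, both included. -/
def subpath (a b : ℕ) (e f : Edge a b) : Finset (Edge a b) :=
  Finset.univ.filter fun g => dd a b e g ≤ dd a b e f

/-- The number of horizontal edges in a set of edges. -/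
def hcount (a b : ℕ) (s : Finset (Edge a b)) : ℕ := (s.filter fun e => e.isLeft = true).card

/-- The number of vertical edges in a set of edges. -/
def vcount (a b : ℕ) (s : Finset (Edge a b)) : ℕ := (s.filter fun e => e.isRight = true).card

/-- The sum of a horizontal grading over the horizontal edges of a set of edges. -/
def hsum (a b : ℕ) (S1 : Fin a → ℕ) (s : Finset (Edge a b)) : ℕ :=
  ∑ e ∈ s, Sum.elim S1 (fun _ => 0) e

/-- The sum of a vertical grading over the vertical edges of a set of edges. -/
def vsum (a b : ℕ) (S2 : Fin b → ℕ) (s : Finset (Edge a b)) : ℕ :=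
  ∑ e ∈ s, Sum.elim (fun _ => 0) S2 e

/-- The horizontal shadow statistic `f_{S1}` of a set of edges. -/
def fH (a b : ℕ) (S1 : Fin a → ℕ) (s : Finset (Edge a b)) : ℤ :=
  (hsum a b S1 s : ℤ) - (vcount a b s : ℤ)

/-- The vertical shadow statistic `f_{S2}` of a set of edges. -/
def fV (a b : ℕ) (S2 : Fin b → ℕ) (s : Finset (Edge a b)) : ℤ :=
  (vsum a b S2 s : ℤ) - (hcount a b s : ℤ)

/-- Horizontal grading condition (HGC) for the pair `(h, v)`: there is an edge `e`
with `he` a proper subpath of `hv` and `|(he)_2| = Σ_{h' ∈ (he)_1} S1(h')`. -/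
def HGC (a b : ℕ) (S1 : Fin a → ℕ) (h : Fin a) (v : Fin b) : Prop :=
  ∃ e : Edge a b, dd a b (.inl h) e < dd a b (.inl h) (.inr v) ∧
    vcount a b (subpath a b (.inl h) e) = hsum a b S1 (subpath a b (.inl h) e)

/-- Vertical grading condition (VGC) for the pair `(h, v)`: there is an edge `e`
with `ev` a proper subpath of `hv` and `|(ev)_1| = Σ_{v' ∈ (ev)_2} S2(v')`. -/
def VGC (a b : ℕ) (S2 : Fin b → ℕ) (h : Fin a) (v : Fin b) : Prop :=
  ∃ e : Edge a b, 0 < dd a b (.inl h) e ∧ dd a b (.inl h) e ≤ dd a b (.inl h) (.inr v) ∧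
    hcount a b (subpath a b e (.inr v)) = vsum a b S2 (subpath a b e (.inr v))

/-- A pair of gradings `(S1, S2)` on `D_{a,b}` is compatible. -/
def Compatible (a b : ℕ) (S1 : Fin a → ℕ) (S2 : Fin b → ℕ) : Prop :=
  ∀ (h : Fin a) (v : Fin b), HGC a b S1 h v ∨ VGC a b S2 h v

/-- `e` is a "balanced" endpoint for the horizontal edge `h`:
`|(he)_2| = Σ_{h' ∈ (he)_1} S1(h')`. -/
def balH (a b : ℕ) (S1 : Fin a → ℕ) (h : Fin a) (e : Edge a b) : Prop :=
  vcount a b (subpath a b (.inl h) e) = hsum a b S1 (subpath a b (.inl h) e)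

/-- The local shadow `sh(h; S1)`: the vertical edges of the shortest balanced
subpath starting at `h` (all of `D2` if there is none). -/
def shH (a b : ℕ) (S1 : Fin a → ℕ) (h : Fin a) : Finset (Fin b) :=
  Finset.univ.filter fun v =>
    ∀ e : Edge a b, balH a b S1 h e → dd a b (.inl h) (.inr v) ≤ dd a b (.inl h) e

/-- The shadow `sh(S1) = ⋃_h sh(h; S1)`. -/
def shadowH (a b : ℕ) (S1 : Fin a → ℕ) : Finset (Fin b) :=
  Finset.univ.filter fun v => ∃ h : Fin a, v ∈ shH a b S1 h

/-- The vertical edges removed from `sh(S1)` to form the remote shadow: for each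
`d ∈ [1,a]`, the (up to) `S1(h_d)` vertical edges of depth `d` immediately
following `h_d`. -/
def removedH (a b : ℕ) (S1 : Fin a → ℕ) : Finset (Fin b) :=
  Finset.univ.filter fun v => ∃ hd : Fin a, hd.1 + 1 = dep a b v ∧
    (Finset.univ.filter fun v' : Fin b => dep a b v' = dep a b v ∧ v'.1 < v.1).card < S1 hd

/-- The remote shadow `rsh(S1)`. -/
def rshH (a b : ℕ) (S1 : Fin a → ℕ) : Finset (Fin b) :=
  shadowH a b S1 \ removedH a b S1

/-- `e` is a "balanced" starting point for the vertical edge `v`: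
`|(ev)_1| = Σ_{v' ∈ (ev)_2} S2(v')`. -/
def balV (a b : ℕ) (S2 : Fin b → ℕ) (e : Edge a b) (v : Fin b) : Prop :=
  hcount a b (subpath a b e (.inr v)) = vsum a b S2 (subpath a b e (.inr v))

/-- The local shadow `sh(v; S2)`: the horizontal edges of the shortest balanced
subpath ending at `v` (all of `D1` if there is none). -/
def shV (a b : ℕ) (S2 : Fin b → ℕ) (v : Fin b) : Finset (Fin a) :=
  Finset.univ.filter fun h =>
    ∀ e : Edge a b, balV a b S2 e v → dd a b (.inl h) (.inr v) ≤ dd a b e (.inr v)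

/-- The shadow `sh(S2) = ⋃_v sh(v; S2)`. -/
def shadowV (a b : ℕ) (S2 : Fin b → ℕ) : Finset (Fin a) :=
  Finset.univ.filter fun h => ∃ v : Fin b, h ∈ shV a b S2 v

/-- The horizontal edges removed from `sh(S2)` to form the remote shadow: for each
`ℓ ∈ [1,b]`, the (up to) `S2(v_ℓ)` horizontal edges of height `ℓ−1` immediately
preceding `v_ℓ`. -/
def removedV (a b : ℕ) (S2 : Fin b → ℕ) : Finset (Fin a) :=
  Finset.univ.filter fun h => ∃ vl : Fin b, vl.1 = ht a b h ∧
    (Finset.univ.filter fun h' : Fin a => ht a b h' = ht a b h ∧ h.1 < h'.1).card < S2 vl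

/-- The remote shadow `rsh(S2)`. -/
def rshV (a b : ℕ) (S2 : Fin b → ℕ) : Finset (Fin a) :=
  shadowV a b S2 \ removedV a b S2

/-- The support of a grading. -/
def suppH (a : ℕ) (S1 : Fin a → ℕ) : Finset (Fin a) := Finset.univ.filter fun h => S1 h ≠ 0
def suppV (b : ℕ) (S2 : Fin b → ℕ) : Finset (Fin b) := Finset.univ.filter fun v => S2 v ≠ 0

open Finset

theorem card_filter_fin_val_mem_Ico {n i j : ℕ} (hj : j ≤ n) :
    #{k : Fin n | i ≤ k.1 ∧ k.1 < j} = j - i := by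
  rw [← card_map Fin.valEmbedding, map_filter', Fin.map_valEmbedding_univ, ← Nat.card_Ico]
  congr 1
  ext m
  simp only [mem_filter, mem_Iio, mem_Ico, Fin.valEmbedding_apply]
  constructor
  · rintro ⟨-, k, hk, rfl⟩
    exact hk
  · intro hm
    exact ⟨by omega, ⟨m, by omega⟩, hm, rfl⟩

section

variable {a b : ℕ}

theorem dep_le_iff (j : Fin b) (k : ℕ) : dep a b j ≤ k ↔ (j.1 + 1) * a ≤ k * b := by
  rw [dep, ← Nat.lt_add_one_iff, Nat.div_lt_iff_lt_mul j.pos, add_one_mul k b]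
  have hb := j.pos
  generalize (j.1 + 1) * a = m
  omega

theorem lt_ht_iff (k : Fin a) (j : ℕ) : j < ht a b k ↔ (j + 1) * a ≤ k.1 * b := by
  rw [ht, Nat.lt_iff_add_one_le, Nat.le_div_iff_mul_le k.pos]

theorem dep_le_iff_lt_ht (j : Fin b) (k : Fin a) : dep a b j ≤ k.1 ↔ j.1 < ht a b k := by
  rw [dep_le_iff, lt_ht_iff]

theorem dep_le (j : Fin b) : dep a b j ≤ a :=
  (dep_le_iff j a).2 (by rw [mul_comm a]; exact Nat.mul_le_mul_right a j.2)

theorem ht_mono : Monotone (ht a b) := fun _ _ hkk' =>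
  Nat.div_le_div_right (Nat.mul_le_mul_right b hkk')

theorem dep_mono : Monotone (dep a b) := fun _ _ hjj' =>
  Nat.div_le_div_right (Nat.sub_le_sub_right
    (Nat.add_le_add_right (Nat.mul_le_mul_right a (Nat.add_le_add_right hjj' 1)) b) 1)

theorem pos_inl_le_pos_inr_iff {k : Fin a} {j : Fin b} :
    pos a b (.inl k) ≤ pos a b (.inr j) ↔ k.1 < dep a b j := by
  have := dep_le_iff_lt_ht j k
  simp only [pos]
  omega

theorem strictMono_pos_inl : StrictMono fun k : Fin a => pos a b (.inl k) := fun _ _ hkk' =>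
  Nat.add_lt_add_of_lt_of_le hkk' (ht_mono hkk'.le)

theorem strictMono_pos_inr : StrictMono fun j : Fin b => pos a b (.inr j) := fun _ _ hjj' =>
  Nat.add_lt_add_of_lt_of_le hjj' (dep_mono hjj'.le)

theorem pos_inl_le_pos_inl_iff {k k' : Fin a} :
    pos a b (.inl k) ≤ pos a b (.inl k') ↔ k ≤ k' :=
  strictMono_pos_inl.le_iff_le

theorem pos_inr_le_pos_inr_iff {j j' : Fin b} :
    pos a b (.inr j) ≤ pos a b (.inr j') ↔ j ≤ j' :=
  strictMono_pos_inr.le_iff_le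

theorem pos_lt_add (e : Edge a b) : pos a b e < a + b := by
  cases e with
  | inl k =>
    rcases Nat.eq_zero_or_pos b with rfl | hb
    · simp [pos, ht]
    · have : ht a b k < b := (Nat.div_lt_iff_lt_mul k.pos).2
        (by rw [mul_comm b]; exact Nat.mul_lt_mul_of_pos_right k.2 hb)
      simp only [pos]
      omega
  | inr j =>
    have := dep_le (a := a) j
    simp only [pos]
    omega

theorem dd_eq_of_pos_le {e f : Edge a b} (hef : pos a b e ≤ pos a b f) :
    dd a b e f = pos a b f - pos a b e := by
  have := pos_lt_add f
  rw [dd, show pos a b f + (a + b) - pos a b e = pos a b f - pos a b e + (a + b) by omega,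
    Nat.add_mod_right, Nat.mod_eq_of_lt (by omega)]

theorem dd_eq_of_pos_lt {e f : Edge a b} (hfe : pos a b f < pos a b e) :
    dd a b e f = pos a b f + (a + b) - pos a b e := by
  have := pos_lt_add e
  exact Nat.mod_eq_of_lt (by omega)

theorem mem_subpath_iff {e f g : Edge a b} (hef : pos a b e ≤ pos a b f) :
    g ∈ subpath a b e f ↔ pos a b e ≤ pos a b g ∧ pos a b g ≤ pos a b f := by
  have := pos_lt_add f
  simp only [subpath, mem_filter, mem_univ, true_and, dd_eq_of_pos_le hef]
  rcases le_or_gt (pos a b e) (pos a b g) with heg | hge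
  · rw [dd_eq_of_pos_le heg]
    omega
  · rw [dd_eq_of_pos_lt hge]
    omega

theorem hcount_eq_card_toLeft (s : Finset (Edge a b)) : hcount a b s = #s.toLeft := by
  rw [hcount, ← card_map .inl (s := s.toLeft)]
  congr 1
  ext e
  cases e <;> simp

theorem vcount_eq_card_toRight (s : Finset (Edge a b)) : vcount a b s = #s.toRight := by
  rw [vcount, ← card_map .inr (s := s.toRight)]
  congr 1
  ext e
  cases e <;> simp

theorem toLeft_subpath {h : Fin a} {v : Fin b}
    (hhv : pos a b (.inl h) ≤ pos a b (.inr v)) :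
    (subpath a b (.inl h) (.inr v)).toLeft =
      ({k | h.1 ≤ k.1 ∧ k.1 < dep a b v} : Finset (Fin a)) := by
  ext k
  rw [mem_toLeft, mem_subpath_iff hhv, pos_inl_le_pos_inl_iff, pos_inl_le_pos_inr_iff,
    mem_filter_univ, Fin.le_iff_val_le_val]

theorem toRight_subpath {h : Fin a} {v : Fin b}
    (hhv : pos a b (.inl h) ≤ pos a b (.inr v)) :
    (subpath a b (.inl h) (.inr v)).toRight =
      ({k | ht a b h ≤ k.1 ∧ k.1 < v.1 + 1} : Finset (Fin b)) := by
  ext k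
  rw [mem_toRight, mem_subpath_iff hhv, pos_inl_le_pos_inr_iff, pos_inr_le_pos_inr_iff, ← not_le,
    dep_le_iff_lt_ht, not_lt, mem_filter_univ, Fin.le_iff_val_le_val, Nat.lt_add_one_iff]

theorem hcount_subpath {h : Fin a} {v : Fin b} (hhv : pos a b (.inl h) ≤ pos a b (.inr v)) :
    hcount a b (subpath a b (.inl h) (.inr v)) = dep a b v - h.1 := by
  rw [hcount_eq_card_toLeft, toLeft_subpath hhv, card_filter_fin_val_mem_Ico (dep_le v)]

theorem vcount_subpath {h : Fin a} {v : Fin b} (hhv : pos a b (.inl h) ≤ pos a b (.inr v)) :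
    vcount a b (subpath a b (.inl h) (.inr v)) = v.1 + 1 - ht a b h := by
  rw [vcount_eq_card_toRight, toRight_subpath hhv, card_filter_fin_val_mem_Ico v.2]

end

theorem slope_bound_general (a1 a2 : ℕ)
    (h : Fin a1) (v : Fin a2)
    (hprec : pos a1 a2 (Sum.inl h) < pos a1 a2 (Sum.inr v)) :
    (a1 : ℤ) * ((vcount a1 a2 (subpath a1 a2 (Sum.inl h) (Sum.inr v)) : ℤ) - 1)
      < (a2 : ℤ) * (hcount a1 a2 (subpath a1 a2 (Sum.inl h) (Sum.inr v)) : ℤ) := by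
  have h_lt_dep : h.1 < dep a1 a2 v := pos_inl_le_pos_inr_iff.1 hprec.le
  have ht_le_v : ht a1 a2 h ≤ v.1 := not_lt.1 ((dep_le_iff_lt_ht v h).not.1 h_lt_dep.not_ge)
  have floor_bound : (h.1 : ℤ) * a2 < (ht a1 a2 h + 1) * a1 := by
    exact_mod_cast not_le.1 (mt (lt_ht_iff h _).2 (lt_irrefl _))
  have ceil_bound : ((v.1 : ℤ) + 1) * a1 ≤ dep a1 a2 v * a2 := by
    exact_mod_cast (dep_le_iff v _).1 le_rfl
  rw [hcount_subpath hprec.le, vcount_subpath hprec.le, Nat.cast_sub h_lt_dep.le,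
    Nat.cast_sub (by omega)]
  push_cast
  linarith

/-- **Slope bound.** For a horizontal edge `h` preceding a vertical edge `v` along
the maximal Dyck path `D_{a1,a2}`, we have `a1·(|(hv)_2| − 1) < a2·|(hv)_1|`. -/
theorem slope_bound (a1 a2 : ℕ) (ha1 : 0 < a1) (ha2 : 0 < a2)
    (h : Fin a1) (v : Fin a2)
    (hprec : pos a1 a2 (Sum.inl h) < pos a1 a2 (Sum.inr v)) :
    (a1 : ℤ) * ((vcount a1 a2 (subpath a1 a2 (Sum.inl h) (Sum.inr v)) : ℤ) - 1)
      < (a2 : ℤ) * (hcount a1 a2 (subpath a1 a2 (Sum.inl h) (Sum.inr v)) : ℤ) :=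
  slope_bound_general a1 a2 h v hprec

end Dyck
end
end
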